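/- arXiv:1901.03005 — 2 statements merged into one kernel-verified Lean document; each statement's English description precedes it below -/
import Mathlib

section
/- Let R > 4 and Λ ≥ 2, and let f : [0, ∞) → (0, ∞)^{L_R*} be a solution of the discrete near-resonance acoustic kinetic system with broadening Λ, with strictly positive values. Then f exits every compact set: for every compact K ⊂ (0, ∞)^{L_R*}, the set {t ≥ 0 : f(t) ∈ K} is bounded. -/
open scoped BigOperators Classical

/-- Euclidean norm of a point of the integer lattice `ℤ³`. -/
noncomputable def enorm3 (p : Fin 3 → ℤ) : ℝ := Real.sqrt (∑ i, ((p i : ℝ))^2)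

/-- The truncated lattice `L_R* = {p ∈ ℤ³ : 0 < |p| < R}` (as a finite set). -/
noncomputable def latticeBall (R : ℝ) : Finset (Fin 3 → ℤ) :=
  (Finset.Icc (fun _ => (-⌈R⌉ : ℤ)) (fun _ => (⌈R⌉ : ℤ))).filter
    (fun p => 0 < enorm3 p ∧ enorm3 p < R)

/-- Right-hand side of the discrete exact-resonance acoustic wave kinetic system, with
kernel `V_{p₁,p₂,p₃} = |p₁||p₂||p₃|` and phonon dispersion `ω(p) = |p|`. -/
noncomputable def Qres (R : ℝ) (f : (Fin 3 → ℤ) → ℝ) (p1 : Fin 3 → ℤ) : ℝ :=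
  (∑ p2 ∈ latticeBall R, ∑ p3 ∈ latticeBall R,
      if p1 = p2 + p3 ∧ enorm3 p1 = enorm3 p2 + enorm3 p3 then
        enorm3 p1 * enorm3 p2 * enorm3 p3 *
          (f p2 * f p3 - f p1 * (f p2 + f p3)) else 0)
  - 2 * ∑ p2 ∈ latticeBall R, ∑ p3 ∈ latticeBall R,
      if p3 = p1 + p2 ∧ enorm3 p3 = enorm3 p1 + enorm3 p2 then
        enorm3 p1 * enorm3 p2 * enorm3 p3 *
          (f p1 * f p2 - f p3 * (f p1 + f p2)) else 0

/-- Right-hand side of the discrete near-resonance acoustic wave kinetic system with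
resonance broadening `Λ`. -/
noncomputable def QNR (R Λ : ℝ) (f : (Fin 3 → ℤ) → ℝ) (p1 : Fin 3 → ℤ) : ℝ :=
  (∑ p2 ∈ latticeBall R, ∑ p3 ∈ latticeBall R,
      if p1 = p2 + p3 ∧ |enorm3 p1 - enorm3 p2 - enorm3 p3| ≤ Λ then
        enorm3 p1 * enorm3 p2 * enorm3 p3 *
          (f p2 * f p3 - f p1 * (f p2 + f p3)) else 0)
  - 2 * ∑ p2 ∈ latticeBall R, ∑ p3 ∈ latticeBall R,
      if p3 = p1 + p2 ∧ |enorm3 p3 - enorm3 p1 - enorm3 p2| ≤ Λ then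
        enorm3 p1 * enorm3 p2 * enorm3 p3 *
          (f p1 * f p2 - f p3 * (f p1 + f p2)) else 0


/-!
Along a positive solution the entropy `S(f) = ∑_p log f_p` satisfies
`dS/dt = ∑ V_{a,b,c} (f_b f_c - f_a (f_b + f_c))² / (f_a f_b f_c)` over near-resonant triads
`a = b + c`, which is strictly positive on the whole positive orthant as soon as `Λ ≥ 2`.
On a compact set `K` of the orthant the entropy is bounded above, while on a small closed
thickening of `K` the vector field is bounded and the entropy production is bounded below.
So after every visit to `K` the solution spends a fixed time near `K`, gaining a fixed amount of
entropy; visits at unbounded times would therefore make the entropy unbounded on `K`.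
-/

open Set Metric

section Calculus

variable {E : Type*} [NormedAddCommGroup E] [NormedSpace ℝ E]

theorem dist_image_le_of_norm_deriv_le_of_dist_le {F F' : ℝ → E} {a ε C : ℝ} (hC : 0 ≤ C)
    (hF : ∀ s ∈ Icc a (a + ε / (C + 1)), HasDerivAt F (F' s) s)
    (hbound : ∀ s ∈ Icc a (a + ε / (C + 1)), dist (F s) (F a) ≤ ε → ‖F' s‖ ≤ C) :
    ∀ s ∈ Icc a (a + ε / (C + 1)), dist (F s) (F a) ≤ ε := by
  have hC1 : 0 < C + 1 := by linarith
  have hwindow : ∀ s ∈ Icc a (a + ε / (C + 1)), (C + 1) * (s - a) ≤ ε := fun s hs =>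
    (le_div_iff₀' hC1).1 (by linarith [hs.2])
  -- Fencing: `F` moves at speed `≤ C < C + 1` as long as it stays `ε`-close to `F a`.
  have hfence : ∀ s ∈ Icc a (a + ε / (C + 1)), ‖F s - F a‖ ≤ (C + 1) * (s - a) := by
    refine image_norm_le_of_norm_deriv_right_lt_deriv_boundary' (f' := F')
      (B' := fun _ => C + 1) ?_ (fun s hs => ?_) (by simp) (by fun_prop) (fun s _ => ?_)
      (fun s hs hs' => ?_)
    · exact fun s hs => ((hF s hs).continuousAt.sub continuousAt_const).continuousWithinAt
    · simpa using ((hF s (Ico_subset_Icc_self hs)).sub_const (F a)).hasDerivWithinAt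
    · simpa using (((hasDerivAt_id s).sub_const a).const_mul (C + 1)).hasDerivWithinAt
    · have hs := Ico_subset_Icc_self hs
      refine (hbound s hs ?_).trans_lt (lt_add_one C)
      rw [dist_eq_norm, hs']
      exact hwindow s hs
  exact fun s hs => (dist_eq_norm (F s) (F a)).trans_le ((hfence s hs).trans (hwindow s hs))

theorem Convex.mul_sub_le_image_sub_of_le_hasDerivAt {s : Set ℝ} (hs : Convex ℝ s)
    {φ φ' : ℝ → ℝ} {c : ℝ} (hφ : ∀ t ∈ s, HasDerivAt φ (φ' t) t) (hc : ∀ t ∈ s, c ≤ φ' t)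
    {x y : ℝ} (hx : x ∈ s) (hy : y ∈ s) (hxy : x ≤ y) : c * (y - x) ≤ φ y - φ x :=
  hs.mul_sub_le_image_sub_of_le_deriv (fun t ht => (hφ t ht).continuousAt.continuousWithinAt)
    (fun t ht => (hφ t (interior_subset ht)).differentiableAt.differentiableWithinAt)
    (fun t ht => (hφ t (interior_subset ht)).deriv ▸ hc t (interior_subset ht)) x hx y hy hxy

end Calculus

theorem Finset.sum_sum_sum_pos' {α M : Type*} [AddCommMonoid M] [PartialOrder M]
    [IsOrderedCancelAddMonoid M] {s : Finset α} {t : α → α → α → M}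
    (h : ∀ a ∈ s, ∀ b ∈ s, ∀ c ∈ s, 0 ≤ t a b c) {a b c : α} (ha : a ∈ s) (hb : b ∈ s)
    (hc : c ∈ s) (hpos : 0 < t a b c) : 0 < ∑ a ∈ s, ∑ b ∈ s, ∑ c ∈ s, t a b c :=
  Finset.sum_pos' (fun a ha => Finset.sum_nonneg fun b hb => Finset.sum_nonneg fun c hc =>
      h a ha b hb c hc)
    ⟨a, ha, Finset.sum_pos' (fun b hb => Finset.sum_nonneg fun c hc => h a ha b hb c hc)
      ⟨b, hb, Finset.sum_pos' (fun c hc => h a ha b hb c hc) ⟨c, hc, hpos⟩⟩⟩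

theorem bddAbove_of_monotoneOn_of_add_le {φ : ℝ → ℝ} {S : Set ℝ} {M c τ : ℝ} (hc : 0 < c)
    (hτ : 0 ≤ τ) (hS : S ⊆ Ici 0) (hφ : MonotoneOn φ (Ici 0)) (hM : ∀ t ∈ S, φ t ≤ M)
    (hstep : ∀ t ∈ S, φ t + c ≤ φ (t + τ)) : BddAbove S := by
  by_contra hS_unbdd
  rw [not_bddAbove_iff] at hS_unbdd
  obtain ⟨t₀, ht₀, -⟩ := hS_unbdd 0
  have hgrowth : ∀ n : ℕ, ∃ t ∈ S, φ t₀ + n * c ≤ φ t := by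
    intro n
    induction n with
    | zero => exact ⟨t₀, ht₀, by simp⟩
    | succ n ih =>
      obtain ⟨t, ht, hφt⟩ := ih
      obtain ⟨t', ht', hlt⟩ := hS_unbdd (t + τ)
      have hmono : φ (t + τ) ≤ φ t' :=
        hφ (by simpa using add_nonneg (hS ht) hτ) (hS ht') hlt.le
      refine ⟨t', ht', ?_⟩
      push_cast
      linarith [hstep t ht]
  obtain ⟨n, hn⟩ := exists_nat_gt ((M - φ t₀) / c)
  obtain ⟨t, ht, hφt⟩ := hgrowth n
  rw [div_lt_iff₀ hc] at hn
  linarith [hM t ht]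

theorem bddAbove_visits_of_strictLyapunov {E : Type*} [NormedAddCommGroup E] [NormedSpace ℝ E]
    [ProperSpace E] {U K : Set E} {Q : E → E} {L D : E → ℝ} {F : ℝ → E} (hU : IsOpen U)
    (hK : IsCompact K) (hKU : K ⊆ U) (hQ : ContinuousOn Q U) (hL : ContinuousOn L U)
    (hD : ContinuousOn D U) (hD_pos : ∀ x ∈ U, 0 < D x) (hFU : ∀ t, 0 ≤ t → F t ∈ U)
    (hF : ∀ t, 0 ≤ t → HasDerivAt F (Q (F t)) t)
    (hLF : ∀ t, 0 ≤ t → HasDerivAt (fun s => L (F s)) (D (F t)) t) :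
    BddAbove {t | 0 ≤ t ∧ F t ∈ K} := by
  obtain ⟨ε, hε, hK'U⟩ := hK.exists_cthickening_subset_open hU hKU
  have hK' : IsCompact (cthickening ε K) := hK.cthickening
  obtain ⟨C₀, hC₀⟩ := hK'.exists_bound_of_continuousOn (hQ.mono hK'U)
  obtain ⟨δ, hδ, hδD⟩ := hK'.exists_forall_le' (hD.mono hK'U) fun x hx => hD_pos x (hK'U hx)
  obtain ⟨M, hM⟩ := hK.bddAbove_image (hL.mono hKU)
  set C := max C₀ 0
  set τ := ε / (C + 1)
  have hτ : 0 ≤ τ := by positivity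
  have hmono : MonotoneOn (fun s => L (F s)) (Ici 0) := fun x hx y hy hxy => by
    have := (convex_Ici 0).mul_sub_le_image_sub_of_le_hasDerivAt (fun t ht => hLF t ht)
      (fun t ht => (hD_pos _ (hFU t ht)).le) hx hy hxy
    linarith
  have hstay : ∀ t₀, 0 ≤ t₀ → F t₀ ∈ K → ∀ s ∈ Icc t₀ (t₀ + τ), F s ∈ cthickening ε K :=
    fun t₀ ht₀ hK₀ s hs => mem_cthickening_of_dist_le _ _ _ _ hK₀ <|
      dist_image_le_of_norm_deriv_le_of_dist_le (le_max_right C₀ 0)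
        (fun s hs => hF s (ht₀.trans hs.1))
        (fun s _ hs' => (hC₀ _ (mem_cthickening_of_dist_le _ _ _ _ hK₀ hs')).trans
          (le_max_left C₀ 0)) s hs
  refine bddAbove_of_monotoneOn_of_add_le (c := δ * τ) (by positivity) hτ (fun t ht => ht.1)
    hmono (fun t ht => hM ⟨F t, ht.2, rfl⟩) fun t₀ ⟨ht₀, hK₀⟩ => ?_
  have hgain := (convex_Icc t₀ (t₀ + τ)).mul_sub_le_image_sub_of_le_hasDerivAt
    (fun t ht => hLF t (ht₀.trans ht.1)) (fun t ht => hδD _ (hstay t₀ ht₀ hK₀ t ht))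
    (left_mem_Icc.2 (by linarith)) (right_mem_Icc.2 (by linarith)) (by linarith)
  rw [add_sub_cancel_left] at hgain
  linarith

theorem abs_le_enorm3 (p : Fin 3 → ℤ) (i : Fin 3) : |(p i : ℝ)| ≤ enorm3 p :=
  Real.abs_le_sqrt (Finset.single_le_sum (fun j _ => sq_nonneg (p j : ℝ)) (Finset.mem_univ i))

theorem enorm3_nonneg (p : Fin 3 → ℤ) : 0 ≤ enorm3 p := Real.sqrt_nonneg _

theorem enorm3_axis (k : ℤ) : enorm3 ![k, 0, 0] = |(k : ℝ)| := by
  simp [enorm3, Fin.sum_univ_three, Real.sqrt_sq_eq_abs]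

theorem mem_latticeBall {R : ℝ} {p : Fin 3 → ℤ} :
    p ∈ latticeBall R ↔ 0 < enorm3 p ∧ enorm3 p < R := by
  refine ⟨fun hp => (Finset.mem_filter.1 hp).2, fun hp => Finset.mem_filter.2 ⟨?_, hp⟩⟩
  have hbound : ∀ i, |p i| ≤ ⌈R⌉ := fun i => by
    have : ((|p i| : ℤ) : ℝ) ≤ R := by
      push_cast
      exact ((abs_le_enorm3 p i).trans_lt hp.2).le
    exact_mod_cast this.trans (Int.le_ceil R)
  exact Finset.mem_Icc.2 ⟨fun i => neg_le_of_abs_le (hbound i), fun i => le_of_abs_le (hbound i)⟩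

theorem axis_mem_latticeBall {R : ℝ} {k : ℤ} (hk : k ≠ 0) (hkR : |(k : ℝ)| < R) :
    ![k, 0, 0] ∈ latticeBall R :=
  mem_latticeBall.2 ⟨by rw [enorm3_axis]; positivity, by rwa [enorm3_axis]⟩

noncomputable def nrKernel (Λ : ℝ) (a b c : Fin 3 → ℤ) : ℝ :=
  if a = b + c ∧ |enorm3 a - enorm3 b - enorm3 c| ≤ Λ then enorm3 a * enorm3 b * enorm3 c else 0

def collision (g : (Fin 3 → ℤ) → ℝ) (a b c : Fin 3 → ℤ) : ℝ := g b * g c - g a * (g b + g c)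

theorem nrKernel_nonneg (Λ : ℝ) (a b c : Fin 3 → ℤ) : 0 ≤ nrKernel Λ a b c := by
  unfold nrKernel
  split_ifs
  · exact mul_nonneg (mul_nonneg (enorm3_nonneg a) (enorm3_nonneg b)) (enorm3_nonneg c)
  · exact le_rfl

theorem nrKernel_comm (Λ : ℝ) (a b c : Fin 3 → ℤ) : nrKernel Λ a b c = nrKernel Λ a c b := by
  simp only [nrKernel, add_comm b c, sub_right_comm (enorm3 a) (enorm3 b),
    mul_right_comm (enorm3 a) (enorm3 b)]

theorem collision_comm (g : (Fin 3 → ℤ) → ℝ) (a b c : Fin 3 → ℤ) :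
    collision g a b c = collision g a c b := by
  unfold collision
  ring

theorem QNR_eq_sum_nrKernel (R Λ : ℝ) (g : (Fin 3 → ℤ) → ℝ) (p : Fin 3 → ℤ) :
    QNR R Λ g p =
      ∑ b ∈ latticeBall R, ∑ c ∈ latticeBall R, nrKernel Λ p b c * collision g p b c
        - 2 * ∑ b ∈ latticeBall R, ∑ c ∈ latticeBall R, nrKernel Λ c p b * collision g c p b := by
  simp only [QNR, nrKernel, collision, ite_mul, zero_mul]
  congr 2
  refine Finset.sum_congr rfl fun b _ => Finset.sum_congr rfl fun c _ => ?_
  split_ifs <;> ring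

theorem sum_QNR_mul (R Λ : ℝ) (g φ : (Fin 3 → ℤ) → ℝ) :
    ∑ p ∈ latticeBall R, QNR R Λ g p * φ p =
      ∑ a ∈ latticeBall R, ∑ b ∈ latticeBall R, ∑ c ∈ latticeBall R,
        nrKernel Λ a b c * collision g a b c * (φ a - φ b - φ c) := by
  set s := latticeBall R
  set T : (Fin 3 → ℤ) → (Fin 3 → ℤ) → (Fin 3 → ℤ) → ℝ :=
    fun a b c => nrKernel Λ a b c * collision g a b c
  have hloss_b : ∑ p ∈ s, (∑ b ∈ s, ∑ c ∈ s, T c p b) * φ p =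
      ∑ a ∈ s, ∑ b ∈ s, ∑ c ∈ s, T a b c * φ b :=
    calc _ = ∑ b ∈ s, ∑ c ∈ s, ∑ a ∈ s, T a b c * φ b := by simp only [Finset.sum_mul]
      _ = ∑ b ∈ s, ∑ a ∈ s, ∑ c ∈ s, T a b c * φ b :=
          Finset.sum_congr rfl fun b _ => Finset.sum_comm
      _ = _ := Finset.sum_comm
  have hloss_c : ∑ a ∈ s, ∑ b ∈ s, ∑ c ∈ s, T a b c * φ b =
      ∑ a ∈ s, ∑ b ∈ s, ∑ c ∈ s, T a b c * φ c := by
    refine Finset.sum_congr rfl fun a _ => ?_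
    rw [Finset.sum_comm]
    simp only [T, nrKernel_comm Λ a, collision_comm g a]
  have hgain : ∑ p ∈ s, (∑ b ∈ s, ∑ c ∈ s, T p b c) * φ p =
      ∑ a ∈ s, ∑ b ∈ s, ∑ c ∈ s, T a b c * φ a := by
    simp only [Finset.sum_mul]
  calc ∑ p ∈ s, QNR R Λ g p * φ p
      = ∑ p ∈ s, (∑ b ∈ s, ∑ c ∈ s, T p b c) * φ p
          - 2 * ∑ p ∈ s, (∑ b ∈ s, ∑ c ∈ s, T c p b) * φ p := by
        rw [Finset.mul_sum, ← Finset.sum_sub_distrib]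
        refine Finset.sum_congr rfl fun p _ => ?_
        rw [QNR_eq_sum_nrKernel]
        ring
    _ = ∑ a ∈ s, ∑ b ∈ s, ∑ c ∈ s, T a b c * φ a
          - (∑ a ∈ s, ∑ b ∈ s, ∑ c ∈ s, T a b c * φ b
            + ∑ a ∈ s, ∑ b ∈ s, ∑ c ∈ s, T a b c * φ c) := by
        rw [hgain, hloss_b, ← hloss_c]
        ring
    _ = _ := by simp only [mul_sub, Finset.sum_sub_distrib]; ring

noncomputable def entropyDissipation (R Λ : ℝ) (g : (Fin 3 → ℤ) → ℝ) : ℝ :=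
  ∑ a ∈ latticeBall R, ∑ b ∈ latticeBall R, ∑ c ∈ latticeBall R,
    nrKernel Λ a b c * collision g a b c ^ 2 / (g a * g b * g c)

/-- The entropy `∑ log f_p` grows at the rate `entropyDissipation`. -/
theorem sum_QNR_div (R Λ : ℝ) {g : (Fin 3 → ℤ) → ℝ} (hg : ∀ p ∈ latticeBall R, g p ≠ 0) :
    ∑ p ∈ latticeBall R, QNR R Λ g p / g p = entropyDissipation R Λ g := by
  simp only [div_eq_mul_inv, sum_QNR_mul]
  refine Finset.sum_congr rfl fun a ha => Finset.sum_congr rfl fun b hb =>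
    Finset.sum_congr rfl fun c hc => ?_
  have := hg a ha
  have := hg b hb
  have := hg c hc
  unfold collision
  field_simp
  ring

theorem entropyDissipation_pos {R Λ : ℝ} (hR : 2 < R) (hΛ : 2 ≤ Λ) {g : (Fin 3 → ℤ) → ℝ}
    (hg : ∀ p ∈ latticeBall R, 0 < g p) : 0 < entropyDissipation R Λ g := by
  have hmem : ∀ k : ℤ, k ≠ 0 → |k| ≤ 2 → ![k, 0, 0] ∈ latticeBall R := fun k hk hk2 =>
    axis_mem_latticeBall hk (by
      have : ((|k| : ℤ) : ℝ) ≤ 2 := by exact_mod_cast hk2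
      push_cast at this
      linarith)
  have h₁ := hmem 1 one_ne_zero (by norm_num)
  have h₂ := hmem 2 two_ne_zero (by norm_num)
  have hm := hmem (-1) (by norm_num) (by norm_num)
  have hterm : ∀ a ∈ latticeBall R, ∀ b ∈ latticeBall R, ∀ c ∈ latticeBall R,
      0 < nrKernel Λ a b c → collision g a b c ≠ 0 →
        0 < nrKernel Λ a b c * collision g a b c ^ 2 / (g a * g b * g c) :=
    fun a ha b hb c hc hK hcoll => by
      have := hg a ha
      have := hg b hb
      have := hg c hc
      positivity
  -- The triads `2e₁ = e₁ + e₁` and `e₁ = 2e₁ + (-e₁)` cannot both be balanced; the second one is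
  -- near-resonant because `Λ ≥ 2`.
  have hcoll : collision g ![2, 0, 0] ![1, 0, 0] ![1, 0, 0] ≠ 0 ∨
      collision g ![1, 0, 0] ![2, 0, 0] ![-1, 0, 0] ≠ 0 := by
    by_contra! h
    unfold collision at h
    have hx := hg _ h₁
    have hy := hg _ h₂
    have hz := hg _ hm
    have hxy : g ![1, 0, 0] = 2 * g ![2, 0, 0] :=
      mul_left_cancel₀ hx.ne' (by linarith [h.1])
    rw [hxy] at h
    nlinarith [mul_pos hy hz, mul_pos hy hy, h.2]
  have hK₁ : 0 < nrKernel Λ ![2, 0, 0] ![1, 0, 0] ![1, 0, 0] := by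
    rw [nrKernel, if_pos ⟨by decide, by norm_num [enorm3_axis]; linarith⟩]
    norm_num [enorm3_axis]
  have hK₂ : 0 < nrKernel Λ ![1, 0, 0] ![2, 0, 0] ![-1, 0, 0] := by
    rw [nrKernel, if_pos ⟨by decide, by norm_num [enorm3_axis]; linarith⟩]
    norm_num [enorm3_axis]
  have hnonneg : ∀ a ∈ latticeBall R, ∀ b ∈ latticeBall R, ∀ c ∈ latticeBall R,
      0 ≤ nrKernel Λ a b c * collision g a b c ^ 2 / (g a * g b * g c) :=
    fun a ha b hb c hc => by
      have := nrKernel_nonneg Λ a b c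
      have := hg a ha
      have := hg b hb
      have := hg c hc
      positivity
  rcases hcoll with hcoll | hcoll
  · exact Finset.sum_sum_sum_pos' hnonneg h₂ h₁ h₁ (hterm _ h₂ _ h₁ _ h₁ hK₁ hcoll)
  · exact Finset.sum_sum_sum_pos' hnonneg h₁ h₂ hm (hterm _ h₁ _ h₂ _ hm hK₂ hcoll)

theorem QNR_congr {R Λ : ℝ} {g g' : (Fin 3 → ℤ) → ℝ} (h : ∀ q ∈ latticeBall R, g q = g' q)
    {p : Fin 3 → ℤ} (hp : p ∈ latticeBall R) : QNR R Λ g p = QNR R Λ g' p := by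
  simp +contextual [QNR_eq_sum_nrKernel, collision, h p hp, h]

theorem continuous_QNR (R Λ : ℝ) (p : Fin 3 → ℤ) :
    Continuous fun g : (Fin 3 → ℤ) → ℝ => QNR R Λ g p := by
  simp only [QNR_eq_sum_nrKernel, collision]
  fun_prop

/-- The phase space of the system is `L_R* → ℝ`, while `QNR` acts on functions on `ℤ³`. -/
noncomputable def extendByZero {α : Type*} (s : Finset α) (g : {x // x ∈ s} → ℝ) : α → ℝ :=
  fun x => if h : x ∈ s then g ⟨x, h⟩ else 0

theorem extendByZero_of_mem {α : Type*} {s : Finset α} (g : {x // x ∈ s} → ℝ) {x : α}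
    (hx : x ∈ s) : extendByZero s g x = g ⟨x, hx⟩ :=
  dif_pos hx

theorem continuous_extendByZero {α : Type*} (s : Finset α) : Continuous (extendByZero s) := by
  refine continuous_pi fun x => ?_
  by_cases hx : x ∈ s
  · simp only [extendByZero, dif_pos hx]
    exact continuous_apply _
  · simp only [extendByZero, dif_neg hx]
    exact continuous_const

theorem sum_QNR_extendByZero_div_pos {R Λ : ℝ} (hR : 2 < R) (hΛ : 2 ≤ Λ)
    {g : {p // p ∈ latticeBall R} → ℝ} (hg : ∀ p, 0 < g p) :
    0 < ∑ p : {p // p ∈ latticeBall R}, QNR R Λ (extendByZero _ g) p / g p := by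
  have hg' : ∀ q ∈ latticeBall R, 0 < extendByZero _ g q := fun q hq => by
    rw [extendByZero_of_mem g hq]
    exact hg _
  have := entropyDissipation_pos hR hΛ hg'
  rw [← sum_QNR_div R Λ fun q hq => (hg' q hq).ne', ← Finset.sum_coe_sort] at this
  simpa only [extendByZero_of_mem g (Subtype.prop _)] using this

/-- For broadening `Λ ≥ 2` (and `R > 4`), every positive solution of the discrete
near-resonance acoustic kinetic system exits every compact subset of the positive
orthant: the set of times it spends in any compact `K` is bounded. -/
theorem solution_exits_compacts (R Λ : ℝ) (hR : 4 < R) (hΛ : 2 ≤ Λ)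
    (f : ℝ → (Fin 3 → ℤ) → ℝ)
    (hsol : ∀ p ∈ latticeBall R, ∀ t : ℝ, 0 ≤ t →
      HasDerivAt (fun s => f s p) (QNR R Λ (f t) p) t)
    (hpos : ∀ p ∈ latticeBall R, ∀ t : ℝ, 0 ≤ t → 0 < f t p) :
    ∀ K : Set ({p // p ∈ latticeBall R} → ℝ), IsCompact K →
      (∀ g ∈ K, ∀ p, 0 < g p) →
      ∃ T : ℝ, ∀ t : ℝ, 0 ≤ t →
        (fun p : {p // p ∈ latticeBall R} => f t p.val) ∈ K → t ≤ T := by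
  intro K hK hK_pos
  let U : Set ({p // p ∈ latticeBall R} → ℝ) := {g | ∀ p, 0 < g p}
  let Q (g : {p // p ∈ latticeBall R} → ℝ) (p : {p // p ∈ latticeBall R}) : ℝ :=
    QNR R Λ (extendByZero _ g) p
  let F (t : ℝ) (p : {p // p ∈ latticeBall R}) : ℝ := f t p
  have hU : IsOpen U := by
    simpa only [U, Set.ofPred_forall] using
      isOpen_iInter_of_finite fun p => isOpen_lt continuous_const (continuous_apply p)
  have hQ : Continuous Q :=
    continuous_pi fun p => (continuous_QNR R Λ p).comp (continuous_extendByZero _)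
  have hF : ∀ t, 0 ≤ t → HasDerivAt F (Q (F t)) t := fun t ht => by
    refine hasDerivAt_pi.2 fun p => ?_
    rw [show Q (F t) p = QNR R Λ (f t) p from
      QNR_congr (fun q hq => extendByZero_of_mem (F t) hq) p.2]
    exact hsol p p.2 t ht
  obtain ⟨T, hT⟩ := bddAbove_visits_of_strictLyapunov (L := fun g => ∑ p, Real.log (g p)) hU hK
    hK_pos hQ.continuousOn
    (continuousOn_finsetSum _ fun p _ =>
      (continuous_apply p).continuousOn.log fun g hg => (hg p).ne')
    (continuousOn_finsetSum _ fun p _ =>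
      ((continuous_apply p).comp hQ).continuousOn.div (continuous_apply p).continuousOn
        fun g hg => (hg p).ne')
    (fun g hg => sum_QNR_extendByZero_div_pos (by linarith) hΛ hg)
    (fun t ht p => hpos p p.2 t ht) hF
    fun t ht => HasDerivAt.fun_sum fun p _ =>
      (hasDerivAt_pi.1 (hF t ht) p).log (hpos p p.2 t ht).ne'
  exact ⟨T, fun t ht htK => hT ⟨ht, htK⟩⟩
end

section
/- Let f : [0, ∞) → (0, ∞)^{L_R*} be a solution of the discrete near-resonance acoustic kinetic system with broadening Λ ≥ 0, with strictly positive values. Then the product ∏_{p∈L_R*} f_p(t) is nondecreasing in t. -/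
open scoped BigOperators Classical

/-!
Writing `P = ∏_p f_p`, one has `P' = P · ∑_p Q_p / f_p`. Symmetrising the collision sum over
each triad `p₁ = p₂ + p₃` turns `∑_p Q_p / f_p` into a sum of terms
`V · (f₂f₃ − f₁f₂ − f₁f₃)(1/f₁ − 1/f₂ − 1/f₃) = V · f₁f₂f₃ · (1/f₁ − 1/f₂ − 1/f₃)²`,
so `P' ≥ 0` while `f` stays positive.
-/

theorem HasDerivAt.finsetProd_of_ne_zero {ι 𝕜 : Type*} [NontriviallyNormedField 𝕜]
    {u : Finset ι} {F : ι → 𝕜 → 𝕜} {F' : ι → 𝕜} {x : 𝕜}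
    (hF : ∀ i ∈ u, HasDerivAt (F i) (F' i) x) (h0 : ∀ i ∈ u, F i x ≠ 0) :
    HasDerivAt (∏ i ∈ u, F i ·) ((∏ i ∈ u, F i x) * ∑ i ∈ u, (F i x)⁻¹ * F' i) x := by
  refine (HasDerivAt.fun_finsetProd hF).congr_deriv ?_
  rw [Finset.mul_sum]
  refine Finset.sum_congr rfl fun i hi => ?_
  rw [smul_eq_mul, ← Finset.mul_prod_erase u (F · x) hi]
  field_simp [h0 i hi]

theorem Finset.sum_mul_triad_gain_loss {α R : Type*} [CommRing R] (S : Finset α)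
    (T : α → α → α → R) (hT : ∀ a b c, T a b c = T a c b) (w : α → R) :
    ∑ a ∈ S, w a * ((∑ b ∈ S, ∑ c ∈ S, T a b c) - 2 * ∑ b ∈ S, ∑ c ∈ S, T c a b) =
      ∑ a ∈ S, ∑ b ∈ S, ∑ c ∈ S, (w a - w b - w c) * T a b c := by
  have hb : ∑ a ∈ S, ∑ b ∈ S, ∑ c ∈ S, w a * T c a b =
      ∑ a ∈ S, ∑ b ∈ S, ∑ c ∈ S, w b * T a b c :=
    (Finset.sum_congr rfl fun _ _ => Finset.sum_comm).trans Finset.sum_comm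
  have hc : ∑ a ∈ S, ∑ b ∈ S, ∑ c ∈ S, w b * T a b c =
      ∑ a ∈ S, ∑ b ∈ S, ∑ c ∈ S, w c * T a b c := by
    refine Finset.sum_congr rfl fun a _ => ?_
    rw [Finset.sum_comm]
    simp only [hT a]
  calc _ = ∑ a ∈ S, ∑ b ∈ S, ∑ c ∈ S, w a * T a b c
          - 2 * ∑ a ∈ S, ∑ b ∈ S, ∑ c ∈ S, w a * T c a b := by
        simp only [mul_sub, Finset.mul_sum, Finset.sum_sub_distrib, mul_left_comm (w _)]
    _ = _ := by
        rw [hb, two_mul]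
        nth_rewrite 2 [hc]
        simp only [sub_mul, Finset.sum_sub_distrib]
        ring

theorem inv_sub_inv_sub_inv_mul_nonneg {K : Type*} [Field K] [LinearOrder K]
    [IsStrictOrderedRing K] {x y z : K} (hx : 0 < x) (hy : 0 < y) (hz : 0 < z) :
    0 ≤ (x⁻¹ - y⁻¹ - z⁻¹) * (y * z - x * (y + z)) := by
  have h : y * z - x * (y + z) = x * y * z * (x⁻¹ - y⁻¹ - z⁻¹) := by
    field_simp
    ring
  rw [h, mul_left_comm, ← sq]
  positivity

noncomputable def nrTriad (Λ : ℝ) (f : (Fin 3 → ℤ) → ℝ) (p1 p2 p3 : Fin 3 → ℤ) : ℝ :=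
  if p1 = p2 + p3 ∧ |enorm3 p1 - enorm3 p2 - enorm3 p3| ≤ Λ then
    enorm3 p1 * enorm3 p2 * enorm3 p3 * (f p2 * f p3 - f p1 * (f p2 + f p3)) else 0

theorem nrTriad_comm (Λ : ℝ) (f : (Fin 3 → ℤ) → ℝ) (p1 p2 p3 : Fin 3 → ℤ) :
    nrTriad Λ f p1 p2 p3 = nrTriad Λ f p1 p3 p2 := by
  unfold nrTriad
  rw [add_comm p2, sub_right_comm _ (enorm3 p2)]
  split_ifs
  · ring
  · rfl

theorem QNR_eq_sum_nrTriad (R Λ : ℝ) (f : (Fin 3 → ℤ) → ℝ) (p1 : Fin 3 → ℤ) :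
    QNR R Λ f p1 = (∑ p2 ∈ latticeBall R, ∑ p3 ∈ latticeBall R, nrTriad Λ f p1 p2 p3)
      - 2 * ∑ p2 ∈ latticeBall R, ∑ p3 ∈ latticeBall R, nrTriad Λ f p3 p1 p2 := by
  unfold QNR nrTriad
  congr 2
  refine Finset.sum_congr rfl fun p2 _ => Finset.sum_congr rfl fun p3 _ => ?_
  split_ifs
  · ring
  · rfl

theorem sum_inv_mul_QNR_nonneg (R Λ : ℝ) (f : (Fin 3 → ℤ) → ℝ)
    (hpos : ∀ p ∈ latticeBall R, 0 < f p) :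
    0 ≤ ∑ p ∈ latticeBall R, (f p)⁻¹ * QNR R Λ f p := by
  simp only [QNR_eq_sum_nrTriad]
  rw [Finset.sum_mul_triad_gain_loss _ _ (nrTriad_comm Λ f)]
  refine Finset.sum_nonneg fun a ha => Finset.sum_nonneg fun b hb =>
    Finset.sum_nonneg fun c hc => ?_
  unfold nrTriad
  split_ifs
  · rw [mul_left_comm]
    exact mul_nonneg (by unfold enorm3; positivity)
      (inv_sub_inv_sub_inv_mul_nonneg (hpos a ha) (hpos b hb) (hpos c hc))
  · simp

theorem product_nondecreasing_general (R Λ : ℝ)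
    (f : ℝ → (Fin 3 → ℤ) → ℝ)
    (hsol : ∀ p ∈ latticeBall R, ∀ t : ℝ, 0 ≤ t →
      HasDerivAt (fun s => f s p) (QNR R Λ (f t) p) t)
    (hpos : ∀ p ∈ latticeBall R, ∀ t : ℝ, 0 ≤ t → 0 < f t p) :
    ∀ s t : ℝ, 0 ≤ s → s ≤ t →
      ∏ p ∈ latticeBall R, f s p ≤ ∏ p ∈ latticeBall R, f t p := by
  intro s t hs hst
  have hderiv : ∀ t, 0 ≤ t → HasDerivAt (fun u => ∏ p ∈ latticeBall R, f u p)
      ((∏ p ∈ latticeBall R, f t p) * ∑ p ∈ latticeBall R, (f t p)⁻¹ * QNR R Λ (f t) p) t :=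
    fun t ht => HasDerivAt.finsetProd_of_ne_zero (F := fun p u => f u p)
      (fun p hp => hsol p hp t ht) (fun p hp => (hpos p hp t ht).ne')
  have hmono : MonotoneOn (fun u => ∏ p ∈ latticeBall R, f u p) (Set.Ici 0) := by
    refine monotoneOn_of_hasDerivWithinAt_nonneg (convex_Ici 0)
      (fun t ht => (hderiv t ht).continuousAt.continuousWithinAt)
      (fun t ht => (hderiv t (interior_subset ht)).hasDerivWithinAt) fun t ht => ?_
    have ht : 0 ≤ t := interior_subset ht
    exact mul_nonneg (Finset.prod_pos fun p hp => hpos p hp t ht).le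
      (sum_inv_mul_QNR_nonneg R Λ (f t) fun p hp => hpos p hp t ht)
  exact hmono hs (hs.trans hst) hst

/-- Along every positive solution of the discrete near-resonance acoustic kinetic
system, the product `∏_{p∈L_R*} f_p(t)` is nondecreasing in `t`
(equivalently, `L(f) = −∏_p f_p` is a Lyapunov function). -/
theorem product_nondecreasing (R Λ : ℝ) (hR : 0 < R) (hΛ : 0 ≤ Λ)
    (f : ℝ → (Fin 3 → ℤ) → ℝ)
    (hsol : ∀ p ∈ latticeBall R, ∀ t : ℝ, 0 ≤ t →
      HasDerivAt (fun s => f s p) (QNR R Λ (f t) p) t)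
    (hpos : ∀ p ∈ latticeBall R, ∀ t : ℝ, 0 ≤ t → 0 < f t p) :
    ∀ s t : ℝ, 0 ≤ s → s ≤ t →
      ∏ p ∈ latticeBall R, f s p ≤ ∏ p ∈ latticeBall R, f t p :=
  product_nondecreasing_general R Λ f hsol hpos
end
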